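/- arXiv:2408.11606 — 2 statements merged into one kernel-verified Lean document; each statement's English description precedes it below -/
import Mathlib

section
/- Grover rotation lemma: let N ≥ 1, let S ⊆ Fin N be a set of marked indices with 0 < M = |S| < N. On EuclideanSpace ℂ (Fin N), define the oracle O as the diagonal map (O v)(x) = (−1)^{(if x ∈ S then 1 else 0)} · v(x), the uniform superposition ψ with ψ(x) = 1/√N for all x, the diffuser D = 2·(projection onto ψ scaled, i.e. Dv = 2⟨ψ, v⟩ψ − v), and the Grover iterate G = D ∘ O. Let θ = Real.arcsin (√(M/N)), let u_S be the vector with u_S(x) = 1/√M for x ∈ S and 0 otherwise, and u_{S^c} the vector with u_{S^c}(x) = 1/√(N−M) for x ∉ S and 0 otherwise. Then for every natural number k, G^k ψ = Real.sin((2k+1)·θ) • u_S + Real.cos((2k+1)·θ) • u_{S^c}. -/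
/-!
The vectors `u_S` and `u_{Sᶜ}` are orthonormal and `ψ = sin θ • u_S + cos θ • u_{Sᶜ}`.
Parametrize the unit circle of their span by `t ↦ sin t • u_S + cos t • u_{Sᶜ}`: there the
oracle acts as the reflection `t ↦ -t` and the diffuser as the reflection `t ↦ 2θ - t` about
`ψ`, so the Grover iterate is the rotation `t ↦ t + 2θ`, and `k` iterations starting from
`t = θ` land at `(2k + 1)θ`.
-/

open Real

noncomputable def circlePoint (𝕜 : Type*) {E : Type*} [RCLike 𝕜] [AddCommGroup E] [Module 𝕜 E]
    (u w : E) (t : ℝ) : E :=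
  ((sin t : ℝ) : 𝕜) • u + ((cos t : ℝ) : 𝕜) • w

theorem Module.End.pow_apply_of_apply_eq_add {R E : Type*} [Semiring R] [AddCommMonoid E]
    [Module R E] {G : Module.End R E} {f : ℝ → E} {a : ℝ} (h : ∀ t, G (f t) = f (t + a))
    (k : ℕ) (t : ℝ) : (G ^ k) (f t) = f (t + k * a) := by
  induction k with
  | zero => simp
  | succ k ih => rw [pow_succ', Module.End.mul_apply, ih, h]; push_cast; ring_nf

section Rotation

variable {𝕜 E : Type*} [RCLike 𝕜] [NormedAddCommGroup E] [InnerProductSpace 𝕜 E]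

theorem inner_circlePoint {u w : E} (hu : ‖u‖ = 1) (hw : ‖w‖ = 1) (huw : inner 𝕜 u w = 0)
    (s t : ℝ) :
    inner 𝕜 (circlePoint 𝕜 u w s) (circlePoint 𝕜 u w t) = ((cos (s - t) : ℝ) : 𝕜) := by
  have hwu : inner 𝕜 w u = 0 := inner_eq_zero_symm.mp huw
  simp only [circlePoint, inner_add_left, inner_add_right, inner_smul_left, inner_smul_right,
    inner_self_eq_norm_sq_to_K, hu, hw, huw, hwu, RCLike.conj_ofReal, cos_sub]
  push_cast
  ring

theorem map_circlePoint_eq_circlePoint_neg {u w : E} {O : E →ₗ[𝕜] E} (hOu : O u = -u)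
    (hOw : O w = w) (t : ℝ) :
    O (circlePoint 𝕜 u w t) = circlePoint 𝕜 u w (-t) := by
  simp only [circlePoint, map_add, map_smul, hOu, hOw, sin_neg, cos_neg, RCLike.ofReal_neg,
    smul_neg, neg_smul]

theorem two_smul_cos_smul_circlePoint_sub (u w : E) (θ s : ℝ) :
    (2 : 𝕜) • ((cos (θ - s) : ℝ) : 𝕜) • circlePoint 𝕜 u w θ - circlePoint 𝕜 u w s =
      circlePoint 𝕜 u w (2 * θ - s) := by
  have hsin : sin (2 * θ - s) = 2 * cos (θ - s) * sin θ - sin s := by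
    rw [sin_sub, cos_sub, sin_two_mul, cos_two_mul']
    linear_combination (-sin s) * sin_sq_add_cos_sq θ
  have hcos : cos (2 * θ - s) = 2 * cos (θ - s) * cos θ - cos s := by
    rw [cos_sub, cos_sub, sin_two_mul, cos_two_mul']
    linear_combination (-cos s) * sin_sq_add_cos_sq θ
  simp only [circlePoint, hsin, hcos]
  match_scalars <;> ring

variable {u w ψ : E} {O D : E →ₗ[𝕜] E} {θ : ℝ}

theorem reflection_comp_reflection_apply_circlePoint (hu : ‖u‖ = 1) (hw : ‖w‖ = 1)
    (huw : inner 𝕜 u w = 0) (hOu : O u = -u) (hOw : O w = w) (hψ : ψ = circlePoint 𝕜 u w θ)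
    (hD : ∀ v, D v = (2 : 𝕜) • inner 𝕜 ψ v • ψ - v) (t : ℝ) :
    (D ∘ₗ O) (circlePoint 𝕜 u w t) = circlePoint 𝕜 u w (t + 2 * θ) := by
  rw [LinearMap.comp_apply, map_circlePoint_eq_circlePoint_neg hOu hOw, hD, hψ,
    inner_circlePoint hu hw huw, two_smul_cos_smul_circlePoint_sub]
  ring_nf

theorem pow_reflection_comp_reflection_apply (hu : ‖u‖ = 1) (hw : ‖w‖ = 1) (huw : inner 𝕜 u w = 0)
    (hOu : O u = -u) (hOw : O w = w) (hψ : ψ = circlePoint 𝕜 u w θ)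
    (hD : ∀ v, D v = (2 : 𝕜) • inner 𝕜 ψ v • ψ - v) (k : ℕ) :
    ((D ∘ₗ O) ^ k) ψ = circlePoint 𝕜 u w ((2 * k + 1) * θ) := by
  rw [hψ, Module.End.pow_apply_of_apply_eq_add
    (reflection_comp_reflection_apply_circlePoint hu hw huw hOu hOw hψ hD)]
  ring_nf

end Rotation

section Uniform

variable {𝕜 ι : Type*} [RCLike 𝕜] [Fintype ι]

theorem EuclideanSpace.norm_eq_one_of_eq_ite [DecidableEq ι] {T : Finset ι} (hT : T.Nonempty)
    {v : EuclideanSpace 𝕜 ι} (hv : ∀ x, v x = if x ∈ T then (((√(T.card : ℝ))⁻¹ : ℝ) : 𝕜) else 0) :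
    ‖v‖ = 1 := by
  have hT' : (0 : ℝ) < T.card := by exact_mod_cast hT.card_pos
  rw [EuclideanSpace.norm_eq, sqrt_eq_one]
  simp only [hv, map_inv₀, apply_ite, norm_inv, norm_algebraMap', norm_eq_abs, norm_zero, ite_pow,
    inv_pow, sq_abs, sq_sqrt hT'.le, ne_eq, OfNat.ofNat_ne_zero, not_false_eq_true, zero_pow,
    Finset.sum_ite_mem, Finset.univ_inter, Finset.sum_const, nsmul_eq_mul]
  exact mul_inv_cancel₀ hT'.ne'

theorem EuclideanSpace.inner_eq_zero_of_forall {u w : EuclideanSpace 𝕜 ι}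
    (h : ∀ x, u x = 0 ∨ w x = 0) : inner 𝕜 u w = 0 := by
  rw [PiLp.inner_apply]
  refine Finset.sum_eq_zero fun x _ => ?_
  rcases h x with h | h <;> simp [h]

end Uniform

theorem sqrt_div_mul_inv_sqrt {a b : ℝ} (ha : 0 < a) : √(a / b) * (√a)⁻¹ = (√b)⁻¹ := by
  have : √a ≠ 0 := (sqrt_pos.mpr ha).ne'
  rw [sqrt_div ha.le]
  field_simp

theorem sin_arcsin_sqrt_div_mul_inv_sqrt {a b : ℝ} (ha : 0 < a) (hab : a < b) :
    sin (arcsin √(a / b)) * (√a)⁻¹ = (√b)⁻¹ := by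
  have hb : 0 < b := ha.trans hab
  have hsqrt_le : √(a / b) ≤ 1 := sqrt_le_one.mpr ((div_le_one hb).mpr hab.le)
  rw [sin_arcsin (by linarith [sqrt_nonneg (a / b)]) hsqrt_le, sqrt_div_mul_inv_sqrt ha]

theorem cos_arcsin_sqrt_div_mul_inv_sqrt {a b : ℝ} (ha : 0 ≤ a) (hab : a < b) :
    cos (arcsin √(a / b)) * (√(b - a))⁻¹ = (√b)⁻¹ := by
  have hb : 0 < b := ha.trans_lt hab
  rw [cos_arcsin, sq_sqrt (by positivity), one_sub_div hb.ne',
    sqrt_div_mul_inv_sqrt (sub_pos.mpr hab)]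

theorem grover_rotation_general (N : ℕ) (S : Finset (Fin N)) (M : ℕ)
    (hM : M = S.card) (hM0 : 0 < M) (hMN : M < N)
    (ψ uS uSc : EuclideanSpace ℂ (Fin N))
    (hψ : ∀ x, ψ x = ((Real.sqrt N)⁻¹ : ℝ))
    (huS : ∀ x, uS x = if x ∈ S then (((Real.sqrt M)⁻¹ : ℝ) : ℂ) else 0)
    (huSc : ∀ x, uSc x = if x ∈ S then 0 else (((Real.sqrt (N - M))⁻¹ : ℝ) : ℂ))
    (O D : EuclideanSpace ℂ (Fin N) →ₗ[ℂ] EuclideanSpace ℂ (Fin N))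
    (hO : ∀ v x, O v x = (-1 : ℂ) ^ (if x ∈ S then 1 else 0) * v x)
    (hD : ∀ v, D v = (2 : ℂ) • (inner ℂ ψ v : ℂ) • ψ - v)
    (θ : ℝ) (hθ : θ = Real.arcsin (Real.sqrt ((M : ℝ) / N))) :
    ∀ k : ℕ, ((D ∘ₗ O) ^ k) ψ =
      ((Real.sin ((2 * k + 1) * θ) : ℝ) : ℂ) • uS +
        ((Real.cos ((2 * k + 1) * θ) : ℝ) : ℂ) • uSc := by
  subst hM
  have hMN' : (S.card : ℝ) < N := by exact_mod_cast hMN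
  have huS_norm : ‖uS‖ = 1 := EuclideanSpace.norm_eq_one_of_eq_ite (Finset.card_pos.mp hM0) huS
  have huSc_norm : ‖uSc‖ = 1 := by
    refine EuclideanSpace.norm_eq_one_of_eq_ite (T := Sᶜ) (Finset.card_pos.mp ?_) fun x => ?_
    · rw [Finset.card_compl, Fintype.card_fin]; omega
    · rw [huSc, Finset.card_compl, Fintype.card_fin, Nat.cast_sub hMN.le]
      by_cases hx : x ∈ S <;> simp [hx]
  have horth : inner ℂ uS uSc = 0 :=
    EuclideanSpace.inner_eq_zero_of_forall fun x => by by_cases hx : x ∈ S <;> simp [huS, huSc, hx]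
  have hOuS : O uS = -uS := by
    ext x; by_cases hx : x ∈ S <;> simp [hO, huS, hx]
  have hOuSc : O uSc = uSc := by
    ext x; by_cases hx : x ∈ S <;> simp [hO, huSc, hx]
  have hψθ : ψ = circlePoint ℂ uS uSc θ := by
    ext x
    by_cases hx : x ∈ S <;>
      simp only [circlePoint, PiLp.add_apply, PiLp.smul_apply, hψ, huS, huSc, hx, if_true,
        if_false, smul_eq_mul, mul_zero, add_zero, zero_add, ← RCLike.ofReal_eq_complex_ofReal,
        ← RCLike.ofReal_mul, hθ, sin_arcsin_sqrt_div_mul_inv_sqrt (Nat.cast_pos.mpr hM0) hMN',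
        cos_arcsin_sqrt_div_mul_inv_sqrt (Nat.cast_nonneg _) hMN']
  exact pow_reflection_comp_reflection_apply huS_norm huSc_norm horth hOuS hOuSc hψθ hD

/-- Grover rotation lemma: starting from the uniform superposition `ψ`, after `k`
iterations of the Grover iterate `G = D ∘ O` the state is
`sin((2k+1)θ) • u_S + cos((2k+1)θ) • u_{Sᶜ}`, where `θ = arcsin √(M/N)`,
`u_S` is the uniform superposition over the `M` marked indices and `u_{Sᶜ}` the
uniform superposition over the `N − M` unmarked indices. -/
theorem grover_rotation (N : ℕ) (hN : 1 ≤ N) (S : Finset (Fin N)) (M : ℕ)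
    (hM : M = S.card) (hM0 : 0 < M) (hMN : M < N)
    (ψ uS uSc : EuclideanSpace ℂ (Fin N))
    (hψ : ∀ x, ψ x = ((Real.sqrt N)⁻¹ : ℝ))
    (huS : ∀ x, uS x = if x ∈ S then (((Real.sqrt M)⁻¹ : ℝ) : ℂ) else 0)
    (huSc : ∀ x, uSc x = if x ∈ S then 0 else (((Real.sqrt (N - M))⁻¹ : ℝ) : ℂ))
    (O D : EuclideanSpace ℂ (Fin N) →ₗ[ℂ] EuclideanSpace ℂ (Fin N))
    (hO : ∀ v x, O v x = (-1 : ℂ) ^ (if x ∈ S then 1 else 0) * v x)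
    (hD : ∀ v, D v = (2 : ℂ) • (inner ℂ ψ v : ℂ) • ψ - v)
    (θ : ℝ) (hθ : θ = Real.arcsin (Real.sqrt ((M : ℝ) / N))) :
    ∀ k : ℕ, ((D ∘ₗ O) ^ k) ψ =
      ((Real.sin ((2 * k + 1) * θ) : ℝ) : ℂ) • uS +
        ((Real.cos ((2 * k + 1) * θ) : ℝ) : ℂ) • uSc :=
  grover_rotation_general N S M hM hM0 hMN ψ uS uSc hψ huS huSc O D hO hD θ hθ
end

section
/- Grover success probability formula: under the setup of the Grover rotation lemma (N ≥ 1, marked set S ⊆ Fin N with 0 < M = |S| < N, oracle O flipping signs on S, diffuser D = 2|ψ⟩⟨ψ| − I about the uniform superposition ψ, G = D ∘ O, θ = Real.arcsin (√(M/N))), for every natural number k the total probability of measuring a marked index after k iterations satisfies ∑_{x ∈ S} ‖(G^k ψ)(x)‖² = (Real.sin ((2k+1)·θ))², and moreover this probability is shared equally: for every x ∈ S, ‖(G^k ψ)(x)‖² = (Real.sin ((2k+1)·θ))² / M. -/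
/-!
The iterates of `ψ` stay in the plane of states with one real amplitude `a` on the marked set
and another `b` off it. The oracle negates `a` and the diffuser reflects both amplitudes about
their mean. Write `√M a = sin φ` and `√(N - M) b = cos φ`, with `sin θ = √(M / N)`. Then the mean
is `cos (φ + θ) / √N`, so a full iteration turns `φ` into `φ + 2θ`. Since `ψ` has `φ = θ`, the marked
amplitude after `k` steps is `sin ((2k + 1) θ) / √M`.
-/

open Real Finset

lemma sin_add_two_mul_eq (φ θ : ℝ) : sin (φ + 2 * θ) = sin φ + 2 * sin θ * cos (φ + θ) := by
  rw [show φ + 2 * θ = (φ + θ) + θ by ring, show φ = (φ + θ) - θ by ring, sin_add, sin_sub]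
  ring_nf

lemma cos_add_two_mul_eq (φ θ : ℝ) : cos (φ + 2 * θ) = 2 * cos θ * cos (φ + θ) - cos φ := by
  rw [show φ + 2 * θ = (φ + θ) + θ by ring, show φ = (φ + θ) - θ by ring, cos_add, cos_sub]
  ring_nf

lemma sqrt_mul_sin_arcsin_sqrt_div {m n : ℝ} (hm : 0 ≤ m) (hmn : m ≤ n) :
    √n * sin (arcsin √(m / n)) = √m := by
  have hn : 0 ≤ n := hm.trans hmn
  rw [sin_arcsin (by linarith [sqrt_nonneg (m / n)])
    (sqrt_le_one.mpr (div_le_one_of_le₀ hmn hn)), ← sqrt_mul hn]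
  rcases hn.eq_or_lt with rfl | hn
  · simp [le_antisymm hmn hm]
  · rw [mul_div_cancel₀ m hn.ne']

lemma sqrt_mul_cos_arcsin_sqrt_div {m n : ℝ} (hm : 0 ≤ m) (hmn : m ≤ n) :
    √n * cos (arcsin √(m / n)) = √(n - m) := by
  have hn : 0 ≤ n := hm.trans hmn
  rw [cos_arcsin, sq_sqrt (div_nonneg hm hn), ← sqrt_mul hn]
  rcases hn.eq_or_lt with rfl | hn
  · simp [le_antisymm hmn hm]
  · rw [mul_sub, mul_one, mul_div_cancel₀ m hn.ne']

section SplitState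

variable {ι : Type*} [DecidableEq ι]

noncomputable def splitState (S : Finset ι) (a b : ℝ) : EuclideanSpace ℂ ι :=
  WithLp.toLp 2 fun x => if x ∈ S then (a : ℂ) else b

@[simp]
lemma splitState_apply (S : Finset ι) (a b : ℝ) (x : ι) :
    splitState S a b x = if x ∈ S then (a : ℂ) else b :=
  rfl

lemma oracle_splitState {S : Finset ι} {O : EuclideanSpace ℂ ι →ₗ[ℂ] EuclideanSpace ℂ ι}
    (hO : ∀ v x, O v x = (-1 : ℂ) ^ (if x ∈ S then 1 else 0) * v x) (a b : ℝ) :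
    O (splitState S a b) = splitState S (-a) b := by
  ext x
  by_cases hx : x ∈ S <;> simp [hO, hx]

variable [Fintype ι]

lemma inner_splitState_of_forall_eq {ψ : EuclideanSpace ℂ ι} {c : ℝ} (hψ : ∀ x, ψ x = c)
    (S : Finset ι) (a b : ℝ) :
    inner ℂ ψ (splitState S a b) = ((c * (#S * a + #Sᶜ * b) : ℝ) : ℂ) := by
  simp only [PiLp.inner_apply, hψ, splitState_apply, RCLike.inner_apply, Complex.conj_ofReal,
    ite_mul, sum_ite, subset_univ, filter_mem_eq_of_subset, sum_const, nsmul_eq_mul, filter_not,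
    compl_eq_univ_sdiff]
  push_cast
  ring

lemma diffuser_splitState {ψ : EuclideanSpace ℂ ι} {c : ℝ} (hψ : ∀ x, ψ x = c)
    {D : EuclideanSpace ℂ ι →ₗ[ℂ] EuclideanSpace ℂ ι}
    (hD : ∀ v, D v = (2 : ℂ) • (inner ℂ ψ v : ℂ) • ψ - v) (S : Finset ι) (a b : ℝ) :
    D (splitState S a b) =
      splitState S (2 * c ^ 2 * (#S * a + #Sᶜ * b) - a) (2 * c ^ 2 * (#S * a + #Sᶜ * b) - b) := by
  ext x
  rw [hD, inner_splitState_of_forall_eq hψ]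
  by_cases hx : x ∈ S <;>
    simp only [PiLp.sub_apply, PiLp.smul_apply, hψ, smul_eq_mul, splitState_apply, hx,
      if_true, if_false] <;> push_cast <;> ring

theorem grover_iterate_eq {S : Finset ι} {ψ : EuclideanSpace ℂ ι}
    {O D : EuclideanSpace ℂ ι →ₗ[ℂ] EuclideanSpace ℂ ι} {θ : ℝ}
    (hψ : ∀ x, ψ x = ((√(Fintype.card ι))⁻¹ : ℝ))
    (hO : ∀ v x, O v x = (-1 : ℂ) ^ (if x ∈ S then 1 else 0) * v x)
    (hD : ∀ v, D v = (2 : ℂ) • (inner ℂ ψ v : ℂ) • ψ - v)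
    (hsin : √(Fintype.card ι) * sin θ = √(#S)) (hcos : √(Fintype.card ι) * cos θ = √(#Sᶜ))
    (hS : 0 < #S) (hSc : 0 < #Sᶜ) (k : ℕ) :
    ((D ∘ₗ O) ^ k) ψ =
      splitState S (sin ((2 * k + 1) * θ) / √(#S)) (cos ((2 * k + 1) * θ) / √(#Sᶜ)) := by
  set r := √(Fintype.card ι)
  have hs : r * sin θ ≠ 0 := by rw [hsin]; positivity
  have hc : r * cos θ ≠ 0 := by rw [hcos]; positivity
  obtain ⟨hr, hsθ⟩ := mul_ne_zero_iff.mp hs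
  have hcθ := right_ne_zero_of_mul hc
  induction k with
  | zero =>
    ext x
    rw [pow_zero, Module.End.one_apply, hψ, ← hsin, ← hcos, Nat.cast_zero, mul_zero, zero_add,
      one_mul]
    by_cases hx : x ∈ S <;> simp only [splitState_apply, hx, if_true, if_false] <;> congr 1 <;>
      field_simp
  | succ k ih =>
    rw [pow_succ', Module.End.mul_apply, ih, LinearMap.comp_apply, oracle_splitState hO,
      diffuser_splitState hψ hD]
    have hm : (#S : ℝ) = (r * sin θ) ^ 2 := by rw [hsin, sq_sqrt (Nat.cast_nonneg _)]
    have hm' : (#Sᶜ : ℝ) = (r * cos θ) ^ 2 := by rw [hcos, sq_sqrt (Nat.cast_nonneg _)]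
    have hangle : (2 * ((k + 1 : ℕ) : ℝ) + 1) * θ = (2 * k + 1) * θ + 2 * θ := by push_cast; ring
    rw [← hsin, ← hcos, hm, hm', hangle, sin_add_two_mul_eq, cos_add_two_mul_eq, cos_add]
    congr 1 <;> field_simp <;> ring

end SplitState

theorem grover_success_probability_general (N : ℕ) (S : Finset (Fin N)) (M : ℕ)
    (hM : M = S.card) (hM0 : 0 < M) (hMN : M < N)
    (ψ : EuclideanSpace ℂ (Fin N))
    (hψ : ∀ x, ψ x = ((Real.sqrt N)⁻¹ : ℝ))
    (O D : EuclideanSpace ℂ (Fin N) →ₗ[ℂ] EuclideanSpace ℂ (Fin N))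
    (hO : ∀ v x, O v x = (-1 : ℂ) ^ (if x ∈ S then 1 else 0) * v x)
    (hD : ∀ v, D v = (2 : ℂ) • (inner ℂ ψ v : ℂ) • ψ - v)
    (θ : ℝ) (hθ : θ = Real.arcsin (Real.sqrt ((M : ℝ) / N))) :
    ∀ k : ℕ,
      (∑ x ∈ S, ‖(((D ∘ₗ O) ^ k) ψ) x‖ ^ 2 = Real.sin ((2 * k + 1) * θ) ^ 2) ∧
      ∀ x ∈ S, ‖(((D ∘ₗ O) ^ k) ψ) x‖ ^ 2 = Real.sin ((2 * k + 1) * θ) ^ 2 / M := by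
  intro k
  subst hM
  have hMN' : (#S : ℝ) ≤ N := by exact_mod_cast hMN.le
  have hcompl : (#Sᶜ : ℝ) = N - #S := by
    rw [card_compl, Fintype.card_fin, Nat.cast_sub hMN.le]
  have hsin : √(Fintype.card (Fin N)) * sin θ = √(#S) := by
    rw [hθ, Fintype.card_fin, sqrt_mul_sin_arcsin_sqrt_div (Nat.cast_nonneg _) hMN']
  have hcos : √(Fintype.card (Fin N)) * cos θ = √(#Sᶜ) := by
    rw [hθ, Fintype.card_fin, sqrt_mul_cos_arcsin_sqrt_div (Nat.cast_nonneg _) hMN', hcompl]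
  have hSc : 0 < #Sᶜ := by rw [card_compl, Fintype.card_fin]; omega
  have hiter := grover_iterate_eq (by simpa only [Fintype.card_fin] using hψ) hO hD hsin hcos
    hM0 hSc k
  have hmarked : ∀ x ∈ S, ‖(((D ∘ₗ O) ^ k) ψ) x‖ ^ 2 = sin ((2 * k + 1) * θ) ^ 2 / #S := by
    intro x hx
    rw [hiter, splitState_apply, if_pos hx, Complex.norm_real, norm_eq_abs, sq_abs, div_pow,
      sq_sqrt (Nat.cast_nonneg _)]
  refine ⟨?_, hmarked⟩
  rw [sum_congr rfl hmarked, sum_const, nsmul_eq_mul]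
  field_simp

/-- Grover success probability: under the Grover setup, after `k` iterations of
`G = D ∘ O` the total probability of measuring a marked index is `sin²((2k+1)θ)`,
and each marked index carries probability `sin²((2k+1)θ) / M`. -/
theorem grover_success_probability (N : ℕ) (hN : 1 ≤ N) (S : Finset (Fin N)) (M : ℕ)
    (hM : M = S.card) (hM0 : 0 < M) (hMN : M < N)
    (ψ : EuclideanSpace ℂ (Fin N))
    (hψ : ∀ x, ψ x = ((Real.sqrt N)⁻¹ : ℝ))
    (O D : EuclideanSpace ℂ (Fin N) →ₗ[ℂ] EuclideanSpace ℂ (Fin N))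
    (hO : ∀ v x, O v x = (-1 : ℂ) ^ (if x ∈ S then 1 else 0) * v x)
    (hD : ∀ v, D v = (2 : ℂ) • (inner ℂ ψ v : ℂ) • ψ - v)
    (θ : ℝ) (hθ : θ = Real.arcsin (Real.sqrt ((M : ℝ) / N))) :
    ∀ k : ℕ,
      (∑ x ∈ S, ‖(((D ∘ₗ O) ^ k) ψ) x‖ ^ 2 = Real.sin ((2 * k + 1) * θ) ^ 2) ∧
      ∀ x ∈ S, ‖(((D ∘ₗ O) ^ k) ψ) x‖ ^ 2 = Real.sin ((2 * k + 1) * θ) ^ 2 / M :=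
  grover_success_probability_general N S M hM hM0 hMN ψ hψ O D hO hD θ hθ
end
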